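/- arXiv:1909.00171 — 4 statements merged into one kernel-verified Lean document; each statement's English description precedes it below -/
import Mathlib

section
/- Let f : {0,1}^n → ℝ be a submodular function. Then its Lovász extension f̂ : [0,1]^n → ℝ is a convex function. -/
/-- A set function `f` on subsets of `[n]` is submodular if
`f (S ∩ T) + f (S ∪ T) ≤ f S + f T` for all `S, T`. -/
def Submodular (n : ℕ) (f : Finset (Fin n) → ℝ) : Prop :=
  ∀ S T : Finset (Fin n), f (S ∩ T) + f (S ∪ T) ≤ f S + f T

/-- `P[j]`: the set of the first `j` elements of the permutation `P` (0-indexed internally). -/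
def prefixSet {n : ℕ} (P : Equiv.Perm (Fin n)) (j : ℕ) : Finset (Fin n) :=
  (Finset.univ.filter fun i : Fin n => (i : ℕ) < j).image P

/-- `P` is consistent with `x` if `x (P 0) ≥ x (P 1) ≥ ⋯ ≥ x (P (n-1))`. -/
def IsConsistent {n : ℕ} (x : Fin n → ℝ) (P : Equiv.Perm (Fin n)) : Prop :=
  ∀ i j : Fin n, i ≤ j → x (P j) ≤ x (P i)

/-- The value `∑_{j=1}^n (f(P[j]) - f(P[j-1])) x_{P_j}` of the Lovász extension computed
through the permutation `P`. -/
def lovaszSum {n : ℕ} (f : Finset (Fin n) → ℝ) (P : Equiv.Perm (Fin n)) (x : Fin n → ℝ) : ℝ :=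
  ∑ j : Fin n, (f (prefixSet P ((j : ℕ) + 1)) - f (prefixSet P (j : ℕ))) * x (P j)

namespace LovaszAux

variable {n : ℕ}

lemma mem_prefixSet (Q : Equiv.Perm (Fin n)) (m : ℕ) (i : Fin n) :
    i ∈ prefixSet Q m ↔ ((Q.symm i : ℕ) < m) := by
  simp only [prefixSet, Finset.mem_image, Finset.mem_filter, Finset.mem_univ, true_and]
  constructor
  · rintro ⟨a, ha, rfl⟩; simpa using ha
  · intro h; exact ⟨Q.symm i, h, Q.apply_symm_apply i⟩

lemma prefixSet_zero (Q : Equiv.Perm (Fin n)) : prefixSet Q 0 = ∅ := by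
  ext i; simp [mem_prefixSet]

/-- The "marginal" weight vector of a permutation. -/
noncomputable def weight (f : Finset (Fin n) → ℝ) (Q : Equiv.Perm (Fin n)) (i : Fin n) : ℝ :=
  f (prefixSet Q ((Q.symm i : ℕ) + 1)) - f (prefixSet Q ((Q.symm i : ℕ)))

lemma lovaszSum_eq_sum_weight (f : Finset (Fin n) → ℝ) (Q : Equiv.Perm (Fin n)) (x : Fin n → ℝ) :
    lovaszSum f Q x = ∑ i : Fin n, weight f Q i * x i := by
  rw [lovaszSum, ← Equiv.sum_comp Q (fun i => weight f Q i * x i)]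
  refine Finset.sum_congr rfl fun j _ => ?_
  simp [weight]

/-- Key submodularity lemma: the weight vector lies in the (shifted) submodular polytope. -/
lemma sum_weight_le {f : Finset (Fin n) → ℝ} (hf : Submodular n f) (Q : Equiv.Perm (Fin n))
    (S : Finset (Fin n)) : ∑ i ∈ S, weight f Q i ≤ f S - f ∅ := by
  induction S using Finset.strongInduction with
  | _ S ih =>
    rcases S.eq_empty_or_nonempty with rfl | hS
    · simp
    · obtain ⟨i, hiS, hmax⟩ := S.exists_max_image (fun i => ((Q.symm i : ℕ))) hS
      set r : ℕ := (Q.symm i : ℕ) with hr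
      have hcap : prefixSet Q r ∩ S = S.erase i := by
        ext j
        simp only [Finset.mem_inter, mem_prefixSet, Finset.mem_erase]
        constructor
        · rintro ⟨hlt, hjS⟩
          refine ⟨fun hji => ?_, hjS⟩
          subst hji; omega
        · rintro ⟨hji, hjS⟩
          refine ⟨?_, hjS⟩
          have hle := hmax j hjS
          have : Q.symm j ≠ Q.symm i := fun h => hji (by
            have := congrArg Q h; simpa using this)
          have : (Q.symm j : ℕ) ≠ r := fun h => this (Fin.ext h)
          omega
      have hcup : prefixSet Q r ∪ S = prefixSet Q (r + 1) := by
        ext j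
        simp only [Finset.mem_union, mem_prefixSet]
        constructor
        · rintro (h | hjS)
          · omega
          · have := hmax j hjS; omega
        · intro h
          rcases Nat.lt_or_ge (Q.symm j : ℕ) r with h' | h'
          · exact Or.inl h'
          · right
            have : (Q.symm j : ℕ) = r := by omega
            have : Q.symm j = Q.symm i := Fin.ext this
            have : j = i := by
              have := congrArg Q this; simpa using this
            exact this ▸ hiS
      have hsub := hf (prefixSet Q r) S
      rw [hcap, hcup] at hsub
      have hwi : weight f Q i ≤ f S - f (S.erase i) := by
        have : weight f Q i = f (prefixSet Q (r + 1)) - f (prefixSet Q r) := rfl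
        rw [this]; linarith
      have hsum : weight f Q i + ∑ j ∈ S.erase i, weight f Q j = ∑ j ∈ S, weight f Q j :=
        Finset.add_sum_erase S (weight f Q) hiS
      have hih := ih (S.erase i) (Finset.erase_ssubset hiS)
      linarith

/-- Turn a vector indexed by `Fin n` into the sequence of its values along `P`, padded by `0`. -/
noncomputable def seqOf (P : Equiv.Perm (Fin n)) (v : Fin n → ℝ) (m : ℕ) : ℝ :=
  if h : m < n then v (P ⟨m, h⟩) else 0

lemma seqOf_coe (P : Equiv.Perm (Fin n)) (v : Fin n → ℝ) (j : Fin n) :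
    seqOf P v (j : ℕ) = v (P j) := by
  simp [seqOf, j.isLt]

lemma sum_prefixSet (P : Equiv.Perm (Fin n)) (v : Fin n → ℝ) {m : ℕ} (hm : m ≤ n) :
    ∑ i ∈ prefixSet P m, v i = ∑ j ∈ Finset.range m, seqOf P v j := by
  rw [prefixSet, Finset.sum_image (by intro a _ b _ h; exact P.injective h)]
  rw [Finset.sum_filter]
  have h1 : ∀ j : Fin n, (if (j : ℕ) < m then v (P j) else 0)
      = (fun k : ℕ => if k < m then seqOf P v k else 0) (j : ℕ) := by
    intro j; simp [seqOf_coe]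
  calc ∑ j : Fin n, (if (j : ℕ) < m then v (P j) else 0)
      = ∑ j : Fin n, (fun k : ℕ => if k < m then seqOf P v k else 0) (j : ℕ) :=
        Finset.sum_congr rfl fun j _ => h1 j
    _ = ∑ k ∈ Finset.range n, (if k < m then seqOf P v k else 0) :=
        Fin.sum_univ_eq_sum_range (fun k : ℕ => if k < m then seqOf P v k else 0) n
    _ = ∑ k ∈ Finset.range m, seqOf P v k := by
        rw [← Finset.sum_filter]
        congr 1
        ext a; simp only [Finset.mem_filter, Finset.mem_range]
        omega

lemma telescope (g : ℕ → ℝ) {j m : ℕ} (hj : j ≤ m) :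
    ∑ k ∈ Finset.Ico j m, (g k - g (k + 1)) = g j - g m := by
  rw [Finset.sum_Ico_eq_sum_range]
  have h := Finset.sum_range_sub' (fun i => g (j + i)) (m - j)
  have h2 : ∀ i, g (j + i) - g (j + (i + 1)) = g (j + i) - g (j + i + 1) := by
    intro i; ring_nf
  calc ∑ i ∈ Finset.range (m - j), (g (j + i) - g (j + i + 1))
      = ∑ i ∈ Finset.range (m - j), ((fun i => g (j + i)) i - (fun i => g (j + i)) (i + 1)) := by
        refine Finset.sum_congr rfl fun i _ => ?_
        simp [Nat.add_assoc]
    _ = g (j + 0) - g (j + (m - j)) := h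
    _ = g j - g m := by rw [Nat.add_zero, Nat.add_sub_cancel' hj]

lemma swap_sum (F : ℕ → ℕ → ℝ) :
    ∑ k ∈ Finset.range n, ∑ j ∈ Finset.range (k + 1), F j k
      = ∑ j ∈ Finset.range n, ∑ k ∈ Finset.Ico j n, F j k := by
  have h1 : ∀ k ∈ Finset.range n, ∑ j ∈ Finset.range (k + 1), F j k
      = ∑ j ∈ Finset.range n, if j ≤ k then F j k else 0 := by
    intro k hk
    rw [← Finset.sum_filter]
    congr 1
    ext a
    simp only [Finset.mem_range, Finset.mem_filter] at *
    omega
  have h2 : ∀ j ∈ Finset.range n, ∑ k ∈ Finset.Ico j n, F j k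
      = ∑ k ∈ Finset.range n, if j ≤ k then F j k else 0 := by
    intro j hj
    rw [← Finset.sum_filter]
    congr 1
    ext a
    simp only [Finset.mem_range, Finset.mem_filter, Finset.mem_Ico]
    omega
  rw [Finset.sum_congr rfl h1, Finset.sum_congr rfl h2, Finset.sum_comm]

/-- Abel-style decomposition of an inner product along the prefix sets of `P`. -/
lemma inner_decomp (P : Equiv.Perm (Fin n)) (v x : Fin n → ℝ) :
    ∑ i : Fin n, v i * x i
      = ∑ k ∈ Finset.range n,
          (seqOf P x k - seqOf P x (k + 1)) * ∑ i ∈ prefixSet P (k + 1), v i := by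
  have hpref : ∀ k ∈ Finset.range n,
      (seqOf P x k - seqOf P x (k + 1)) * ∑ i ∈ prefixSet P (k + 1), v i
        = ∑ j ∈ Finset.range (k + 1), (seqOf P x k - seqOf P x (k + 1)) * seqOf P v j := by
    intro k hk
    rw [Finset.mem_range] at hk
    rw [sum_prefixSet P v (by omega), Finset.mul_sum]
  rw [Finset.sum_congr rfl hpref, swap_sum (fun j k => (seqOf P x k - seqOf P x (k + 1)) * seqOf P v j)]
  have h2 : ∀ j ∈ Finset.range n,
      ∑ k ∈ Finset.Ico j n, (seqOf P x k - seqOf P x (k + 1)) * seqOf P v j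
        = seqOf P x j * seqOf P v j := by
    intro j hj
    rw [Finset.mem_range] at hj
    rw [← Finset.sum_mul, telescope (seqOf P x) (le_of_lt hj)]
    have : seqOf P x n = 0 := by simp [seqOf]
    rw [this, sub_zero]
  rw [Finset.sum_congr rfl h2]
  rw [← Equiv.sum_comp P (fun i => v i * x i), ← Fin.sum_univ_eq_sum_range
    (fun j => seqOf P x j * seqOf P v j) n]
  refine (Finset.sum_congr rfl fun j _ => ?_).symm
  rw [seqOf_coe, seqOf_coe, mul_comm]

lemma coeff_nonneg {x : Fin n → ℝ} (hx : x ∈ Set.Icc (0 : Fin n → ℝ) 1)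
    {P : Equiv.Perm (Fin n)} (hP : IsConsistent x P) (k : ℕ) :
    0 ≤ seqOf P x k - seqOf P x (k + 1) := by
  by_cases hk : k < n
  · by_cases hk1 : k + 1 < n
    · have := hP ⟨k, hk⟩ ⟨k + 1, hk1⟩ (by simp [Fin.le_def])
      simp only [seqOf, dif_pos hk, dif_pos hk1]
      linarith
    · have h0 : (0 : Fin n → ℝ) ≤ x := hx.1
      simp only [seqOf, dif_pos hk, dif_neg hk1]
      have := h0 (P ⟨k, hk⟩)
      simpa using this
  · simp only [seqOf, dif_neg hk, dif_neg (by omega : ¬ k + 1 < n)]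
    simp

lemma sum_weight_prefix (f : Finset (Fin n) → ℝ) (P : Equiv.Perm (Fin n)) {m : ℕ} (hm : m ≤ n) :
    ∑ i ∈ prefixSet P m, weight f P i = f (prefixSet P m) - f ∅ := by
  rw [sum_prefixSet P _ hm]
  have hterm : ∀ j ∈ Finset.range m, seqOf P (weight f P) j
      = f (prefixSet P (j + 1)) - f (prefixSet P j) := by
    intro j hj
    rw [Finset.mem_range] at hj
    have hjn : j < n := lt_of_lt_of_le hj hm
    simp only [seqOf, dif_pos hjn, weight]
    congr 2 <;> simp
  rw [Finset.sum_congr rfl hterm, Finset.sum_range_sub (fun m => f (prefixSet P m)) m,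
    prefixSet_zero]

/-- The greedy/Edmonds lemma: among all permutations, a consistent one maximizes the Lovász sum. -/
lemma lovaszSum_le {f : Finset (Fin n) → ℝ} (hf : Submodular n f)
    {x : Fin n → ℝ} (hx : x ∈ Set.Icc (0 : Fin n → ℝ) 1)
    {P : Equiv.Perm (Fin n)} (hP : IsConsistent x P) (Q : Equiv.Perm (Fin n)) :
    lovaszSum f Q x ≤ lovaszSum f P x := by
  rw [lovaszSum_eq_sum_weight, lovaszSum_eq_sum_weight,
    inner_decomp P (weight f Q) x, inner_decomp P (weight f P) x]
  refine Finset.sum_le_sum fun k hk => ?_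
  rw [Finset.mem_range] at hk
  have hm : k + 1 ≤ n := by omega
  refine mul_le_mul_of_nonneg_left ?_ (coeff_nonneg hx hP k)
  rw [sum_weight_prefix f P hm]
  exact sum_weight_le hf Q (prefixSet P (k + 1))

lemma exists_consistent (x : Fin n → ℝ) : ∃ P : Equiv.Perm (Fin n), IsConsistent x P := by
  refine ⟨Tuple.sort (fun i => -x i), fun i j hij => ?_⟩
  have := Tuple.monotone_sort (fun i => -x i) hij
  simpa using this

lemma lovaszSum_linear (f : Finset (Fin n) → ℝ) (P : Equiv.Perm (Fin n))
    (a b : ℝ) (x y : Fin n → ℝ) :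
    lovaszSum f P (a • x + b • y) = a * lovaszSum f P x + b * lovaszSum f P y := by
  simp only [lovaszSum, Pi.add_apply, Pi.smul_apply, smul_eq_mul, Finset.mul_sum,
    ← Finset.sum_add_distrib]
  refine Finset.sum_congr rfl fun j _ => ?_
  ring

end LovaszAux

/-- The Lovász extension of a submodular function is convex on `[0,1]^n`. -/
theorem stmt0 (n : ℕ) (hn : 1 ≤ n) (f : Finset (Fin n) → ℝ) (hf : Submodular n f)
    (fhat : (Fin n → ℝ) → ℝ)
    (hfhat : ∀ x ∈ Set.Icc (0 : Fin n → ℝ) 1, ∀ P : Equiv.Perm (Fin n),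
      IsConsistent x P → fhat x = lovaszSum f P x) :
    ConvexOn ℝ (Set.Icc (0 : Fin n → ℝ) 1) fhat := by
  refine ⟨convex_Icc _ _, ?_⟩
  intro x hx y hy a b ha hb hab
  have hz : a • x + b • y ∈ Set.Icc (0 : Fin n → ℝ) 1 :=
    (convex_Icc (0 : Fin n → ℝ) 1) hx hy ha hb hab
  obtain ⟨Pz, hPz⟩ := LovaszAux.exists_consistent (a • x + b • y)
  obtain ⟨Px, hPx⟩ := LovaszAux.exists_consistent x
  obtain ⟨Py, hPy⟩ := LovaszAux.exists_consistent y
  rw [hfhat _ hz Pz hPz, hfhat _ hx Px hPx, hfhat _ hy Py hPy,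
    LovaszAux.lovaszSum_linear f Pz a b x y]
  have h1 : lovaszSum f Pz x ≤ lovaszSum f Px x := LovaszAux.lovaszSum_le hf hx hPx Pz
  have h2 : lovaszSum f Pz y ≤ lovaszSum f Py y := LovaszAux.lovaszSum_le hf hy hPy Pz
  have := mul_le_mul_of_nonneg_left h1 ha
  have := mul_le_mul_of_nonneg_left h2 hb
  simp only [smul_eq_mul]
  linarith
end

section
/- Let f : {0,1}^n → ℝ be a submodular function with Lovász extension f̂. Let x ∈ [0,1]^n and let P be any permutation of [n] consistent with x. Then the vector g(x) ∈ ℝ^n defined by g(x)_{P_j} = f(P[j]) − f(P[j−1]) for 1 ≤ j ≤ n is a subgradient of f̂ at x, i.e. f̂(y) − f̂(x) ≥ ⟨g(x), y − x⟩ for all y ∈ [0,1]^n. -/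
/-- The subgradient vector associated with a permutation `P`:
`g^P_{P_j} = f(P[j]) - f(P[j-1])`. -/
noncomputable def gradP {n : ℕ} (f : Finset (Fin n) → ℝ) (P : Equiv.Perm (Fin n)) :
    Fin n → ℝ :=
  fun i => f (prefixSet P ((P.symm i : ℕ) + 1)) - f (prefixSet P (P.symm i : ℕ))

open Finset

lemma Submodular.insert_sub_le {n : ℕ} {f : Finset (Fin n) → ℝ} (hf : Submodular n f)
    {A B : Finset (Fin n)} {a : Fin n} (hAB : A ⊆ B) (ha : a ∉ B) :
    f (insert a B) - f B ≤ f (insert a A) - f A := by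
  have hinter : insert a A ∩ B = A := by
    rw [insert_inter_of_notMem ha, inter_eq_left.mpr hAB]
  have hunion : insert a A ∪ B = insert a B := by
    rw [insert_union, union_eq_right.mpr hAB]
  have := hf (insert a A) B
  rw [hinter, hunion] at this
  linarith

lemma sum_range_sub_mul_nonneg (D w : ℕ → ℝ) (hD : ∀ j, D 0 ≤ D j) (hw : Antitone w)
    (hw0 : 0 ≤ w) (m : ℕ) : 0 ≤ ∑ j ∈ range m, (D (j + 1) - D j) * w j := by
  suffices h : ∀ m, (D m - D 0) * w m ≤ ∑ j ∈ range m, (D (j + 1) - D j) * w j from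
    (mul_nonneg (sub_nonneg.mpr (hD m)) (hw0 m)).trans (h m)
  intro m
  induction m with
  | zero => simp
  | succ m ih =>
    rw [sum_range_succ]
    have := mul_le_mul_of_nonneg_left (hw m.le_succ) (sub_nonneg.mpr (hD (m + 1)))
    nlinarith

section

variable {n : ℕ}

lemma prefixSet_zero (P : Equiv.Perm (Fin n)) : prefixSet P 0 = ∅ := by
  simp [prefixSet]

lemma prefixSet_self (P : Equiv.Perm (Fin n)) : prefixSet P n = univ := by
  simp [prefixSet, Fin.is_lt]

lemma prefixSet_succ (P : Equiv.Perm (Fin n)) (j : Fin n) :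
    prefixSet P (j + 1) = insert (P j) (prefixSet P j) := by
  have : (univ.filter fun i : Fin n => (i : ℕ) < j + 1)
      = insert j (univ.filter fun i : Fin n => (i : ℕ) < j) := by
    ext i
    simp [le_iff_eq_or_lt, Fin.ext_iff]
  rw [prefixSet, this, image_insert, prefixSet]

lemma apply_notMem_prefixSet (P : Equiv.Perm (Fin n)) (j : Fin n) :
    P j ∉ prefixSet P j := by
  simp [prefixSet]

lemma gradP_apply_perm (f : Finset (Fin n) → ℝ) (P : Equiv.Perm (Fin n)) (j : Fin n) :
    gradP f P (P j) = f (prefixSet P (j + 1)) - f (prefixSet P j) := by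
  simp [gradP]

lemma lovaszSum_eq_sum_gradP_mul (f : Finset (Fin n) → ℝ) (P : Equiv.Perm (Fin n))
    (x : Fin n → ℝ) : lovaszSum f P x = ∑ i, gradP f P i * x i := by
  rw [← Equiv.sum_comp P]
  simp [lovaszSum, gradP_apply_perm]

lemma exists_isConsistent (x : Fin n → ℝ) : ∃ P, IsConsistent x P :=
  ⟨Fin.revPerm.trans (Tuple.sort x), fun _ _ hij =>
    Tuple.monotone_sort x (Fin.rev_le_rev.mpr hij)⟩

lemma sum_gradP_inter_prefixSet_le {f : Finset (Fin n) → ℝ} (hf : Submodular n f)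
    (P : Equiv.Perm (Fin n)) (S : Finset (Fin n)) :
    ∀ m ≤ n, ∑ i ∈ S ∩ prefixSet P m, gradP f P i ≤ f (S ∩ prefixSet P m) - f ∅
  | 0, _ => by simp [prefixSet_zero]
  | m + 1, hm => by
    have ih := sum_gradP_inter_prefixSet_le hf P S m (by omega)
    let j : Fin n := ⟨m, hm⟩
    change ∑ i ∈ S ∩ prefixSet P (j + 1), _ ≤ f (S ∩ prefixSet P (j + 1)) - _
    rw [prefixSet_succ]
    by_cases hj : P j ∈ S
    · have hgain := hf.insert_sub_le (inter_subset_right (s₁ := S)) (apply_notMem_prefixSet P j)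
      rw [inter_insert_of_mem hj, sum_insert fun h => apply_notMem_prefixSet P j (mem_inter.mp h).2,
        gradP_apply_perm, prefixSet_succ]
      linarith
    · rwa [inter_insert_of_notMem hj]

lemma sum_gradP_le {f : Finset (Fin n) → ℝ} (hf : Submodular n f) (P : Equiv.Perm (Fin n))
    (S : Finset (Fin n)) : ∑ i ∈ S, gradP f P i ≤ f S - f ∅ := by
  simpa [prefixSet_self] using sum_gradP_inter_prefixSet_le hf P S n le_rfl

lemma sum_mul_le_lovaszSum (f : Finset (Fin n) → ℝ) {g : Fin n → ℝ}
    (hg : ∀ S, ∑ i ∈ S, g i ≤ f S - f ∅) {Q : Equiv.Perm (Fin n)} {y : Fin n → ℝ}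
    (hy : 0 ≤ y) (hQ : IsConsistent y Q) : ∑ i, g i * y i ≤ lovaszSum f Q y := by
  let D : ℕ → ℝ := fun j => f (prefixSet Q j) - ∑ i ∈ prefixSet Q j, g i
  let w : ℕ → ℝ := fun j => if h : j < n then y (Q ⟨j, h⟩) else 0
  have hD : ∀ j, D 0 ≤ D j := fun j => by
    simp only [D, prefixSet_zero, sum_empty, sub_zero]
    linarith [hg (prefixSet Q j)]
  have hw : Antitone w := antitone_nat_of_succ_le fun j => by
    by_cases hj : j + 1 < n
    · simp only [w, dif_pos hj, dif_pos (Nat.lt_of_succ_lt hj)]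
      exact hQ ⟨j, _⟩ ⟨j + 1, hj⟩ (Nat.le_succ j)
    · simp only [w, dif_neg hj]
      split_ifs
      exacts [hy _, le_rfl]
  have hw0 : 0 ≤ w := fun j => by
    simp only [w]
    split_ifs
    exacts [hy _, le_rfl]
  have hstep : ∀ j : Fin n, D (j + 1) - D j = gradP f Q (Q j) - g (Q j) := fun j => by
    simp only [D, prefixSet_succ, sum_insert (apply_notMem_prefixSet Q j), gradP_apply_perm]
    ring
  have habel : ∑ j ∈ range n, (D (j + 1) - D j) * w j
      = lovaszSum f Q y - ∑ i, g i * y i := by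
    rw [← Fin.sum_univ_eq_sum_range (fun j => (D (j + 1) - D j) * w j),
      lovaszSum_eq_sum_gradP_mul, ← Equiv.sum_comp Q (fun i => gradP f Q i * y i),
      ← Equiv.sum_comp Q (fun i => g i * y i), ← sum_sub_distrib]
    refine sum_congr rfl fun j _ => ?_
    rw [hstep, show w j = y (Q j) from dif_pos j.is_lt]
    ring
  linarith [sum_range_sub_mul_nonneg D w hD hw hw0 n]

end

theorem stmt3_general (n : ℕ) (f : Finset (Fin n) → ℝ) (hf : Submodular n f)
    (fhat : (Fin n → ℝ) → ℝ)
    (hfhat : ∀ x ∈ Set.Icc (0 : Fin n → ℝ) 1, ∀ P : Equiv.Perm (Fin n),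
      IsConsistent x P → fhat x = lovaszSum f P x)
    (x : Fin n → ℝ) (hx : x ∈ Set.Icc (0 : Fin n → ℝ) 1)
    (P : Equiv.Perm (Fin n)) (hP : IsConsistent x P) :
    ∀ y ∈ Set.Icc (0 : Fin n → ℝ) 1,
      fhat y - fhat x ≥ ∑ i, gradP f P i * (y i - x i) := by
  intro y hy
  obtain ⟨Q, hQ⟩ := exists_isConsistent y
  have hle := sum_mul_le_lovaszSum f (sum_gradP_le hf P) hy.1 hQ
  rw [hfhat y hy Q hQ, hfhat x hx P hP, lovaszSum_eq_sum_gradP_mul f P x]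
  simp only [mul_sub, sum_sub_distrib]
  linarith

/-- For any `x ∈ [0,1]^n` and any permutation `P` consistent with `x`, the vector
`g(x)` with `g(x)_{P_j} = f(P[j]) - f(P[j-1])` is a subgradient of the Lovász extension
at `x`. -/
theorem stmt3 (n : ℕ) (hn : 1 ≤ n) (f : Finset (Fin n) → ℝ) (hf : Submodular n f)
    (fhat : (Fin n → ℝ) → ℝ)
    (hfhat : ∀ x ∈ Set.Icc (0 : Fin n → ℝ) 1, ∀ P : Equiv.Perm (Fin n),
      IsConsistent x P → fhat x = lovaszSum f P x)
    (x : Fin n → ℝ) (hx : x ∈ Set.Icc (0 : Fin n → ℝ) 1)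
    (P : Equiv.Perm (Fin n)) (hP : IsConsistent x P) :
    ∀ y ∈ Set.Icc (0 : Fin n → ℝ) 1,
      fhat y - fhat x ≥ ∑ i, gradP f P i * (y i - x i) :=
  stmt3_general n f hf fhat hfhat x hx P hP
end

section
/- Let s ≥ 0 and S^s = { x ∈ [0,1]^n : Σ_{i=1}^n x_i ≤ s }. For any y ∈ ℝ^n, define z(λ) ∈ ℝ^n by z(λ)_i = median(0, 1, y_i − λ) = max(0, min(1, y_i − λ)). Then there is a smallest nonnegative real number λ* such that Σ_i z(λ*)_i ≤ s, and z(λ*) is the Euclidean projection of y onto S^s, i.e. z(λ*) = argmin_{x ∈ S^s} ‖x − y‖₂². -/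
/-- Projection onto `S^s = {x ∈ [0,1]^n : ∑ᵢ xᵢ ≤ s}`: there is a smallest `λ ≥ 0` such
that `z(λ)ᵢ = median(0, 1, yᵢ - λ)` satisfies `∑ᵢ z(λ)ᵢ ≤ s`, and for that `λ`, `z(λ)` is
the Euclidean projection of `y` onto `S^s`. -/
theorem stmt9 (n : ℕ) (s : ℝ) (hs : 0 ≤ s) (y : Fin n → ℝ) :
    ∃ lam : ℝ,
      IsLeast {l : ℝ | 0 ≤ l ∧ ∑ i, max 0 (min 1 (y i - l)) ≤ s} lam ∧
      ((∀ i, max 0 (min 1 (y i - lam)) ∈ Set.Icc (0 : ℝ) 1) ∧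
        ∑ i, max 0 (min 1 (y i - lam)) ≤ s) ∧
      ∀ w : Fin n → ℝ, (∀ i, w i ∈ Set.Icc (0 : ℝ) 1) → ∑ i, w i ≤ s →
        ∑ i, (max 0 (min 1 (y i - lam)) - y i) ^ 2 ≤ ∑ i, (w i - y i) ^ 2 := by
  have hfc : Continuous (fun l : ℝ => ∑ i, max 0 (min 1 (y i - l))) := by
    apply continuous_finset_sum
    intro i _
    exact continuous_const.max (continuous_const.min (continuous_const.sub continuous_id))
  set A : Set ℝ := {l : ℝ | 0 ≤ l ∧ ∑ i, max 0 (min 1 (y i - l)) ≤ s} with hA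
  have hne : A.Nonempty := by
    refine ⟨1 + ∑ i, |y i|, by positivity, ?_⟩
    have h0 : ∑ i, max 0 (min 1 (y i - (1 + ∑ j, |y j|))) = 0 := by
      apply Finset.sum_eq_zero
      intro i _
      have h1 : y i ≤ ∑ j, |y j| :=
        le_trans (le_abs_self _)
          (Finset.single_le_sum (fun j _ => abs_nonneg (y j)) (Finset.mem_univ i))
      have h2 : y i - (1 + ∑ j, |y j|) ≤ 0 := by linarith
      exact max_eq_left (le_trans (min_le_right _ _) h2)
    simpa [h0] using hs
  have hbdd : BddBelow A := ⟨0, fun x hx => hx.1⟩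
  have hcl : IsClosed A := by
    have : A = {l : ℝ | 0 ≤ l} ∩ {l : ℝ | ∑ i, max 0 (min 1 (y i - l)) ≤ s} := rfl
    rw [this]
    exact (isClosed_le continuous_const continuous_id).inter
      (isClosed_le hfc continuous_const)
  set lam := sInf A with hlam
  have hmem : lam ∈ A := hcl.csInf_mem hne hbdd
  have hleast : IsLeast A lam := ⟨hmem, fun x hx => csInf_le hbdd hx⟩
  -- complementary slackness
  have hcs : 0 < lam → ∑ i, max 0 (min 1 (y i - lam)) = s := by
    intro hpos
    by_contra hne'
    have hlt : ∑ i, max 0 (min 1 (y i - lam)) < s := lt_of_le_of_ne hmem.2 hne'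
    have hopen : IsOpen {l : ℝ | ∑ i, max 0 (min 1 (y i - l)) < s} :=
      isOpen_lt hfc continuous_const
    obtain ⟨ε, hε, hball⟩ := Metric.isOpen_iff.1 hopen lam hlt
    set l := max 0 (lam - ε / 2) with hl
    have hl1 : (0 : ℝ) ≤ l := le_max_left _ _
    have hl2 : l < lam := max_lt hpos (by linarith)
    have hl3 : lam - ε / 2 ≤ l := le_max_right _ _
    have hdist : dist l lam < ε := by
      rw [Real.dist_eq, abs_lt]
      constructor <;> linarith
    have hmem2 : l ∈ A := ⟨hl1, le_of_lt (hball hdist)⟩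
    have := hleast.2 hmem2
    linarith
  refine ⟨lam, hleast, ⟨fun i => ⟨le_max_left _ _, max_le (by norm_num) (min_le_left _ _)⟩,
    hmem.2⟩, ?_⟩
  intro w hw hws
  set z : Fin n → ℝ := fun i => max 0 (min 1 (y i - lam)) with hz
  have key1 : ∀ i, 0 ≤ (z i - (y i - lam)) * (w i - z i) := by
    intro i
    rcases le_or_gt (y i - lam) 0 with ht | ht
    · have hzi : z i = 0 := max_eq_left (le_trans (min_le_right _ _) ht)
      rw [hzi]
      have := (hw i).1
      nlinarith
    · rcases le_or_gt (y i - lam) 1 with ht1 | ht1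
      · have hzi : z i = y i - lam := by
          rw [hz]; simp only
          rw [min_eq_right ht1, max_eq_right (le_of_lt ht)]
        rw [hzi]; ring_nf; simp
      · have hzi : z i = 1 := by
          rw [hz]; simp only
          rw [min_eq_left (le_of_lt ht1), max_eq_right (by norm_num : (0:ℝ) ≤ 1)]
        rw [hzi]
        have := (hw i).2
        nlinarith
  have key2 : 0 ≤ lam * (∑ i, z i - ∑ i, w i) := by
    rcases eq_or_lt_of_le hmem.1 with h0 | hpos
    · rw [← h0]; ring_nf; simp
    · have hzs : ∑ i, z i = s := hcs hpos
      have : ∑ i, w i ≤ ∑ i, z i := by rw [hzs]; exact hws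
      have h1 : 0 ≤ ∑ i, z i - ∑ i, w i := by linarith
      exact mul_nonneg (le_of_lt hpos) h1
  have expand : ∀ i, (w i - y i) ^ 2 =
      (z i - y i) ^ 2 + ((w i - z i) ^ 2 + 2 * ((z i - (y i - lam)) * (w i - z i))
        + 2 * lam * (z i - w i)) := fun i => by ring
  have hsum2 : ∑ i, ((w i - z i) ^ 2 + 2 * ((z i - (y i - lam)) * (w i - z i))
      + 2 * lam * (z i - w i)) ≥ 0 := by
    rw [Finset.sum_add_distrib, Finset.sum_add_distrib]
    have e1 : 0 ≤ ∑ i, (w i - z i) ^ 2 := Finset.sum_nonneg fun i _ => sq_nonneg _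
    have e2 : 0 ≤ ∑ i, 2 * ((z i - (y i - lam)) * (w i - z i)) :=
      Finset.sum_nonneg fun i _ => by nlinarith [key1 i]
    have e3 : 0 ≤ ∑ i, 2 * lam * (z i - w i) := by
      rw [← Finset.mul_sum, Finset.sum_sub_distrib]
      nlinarith [key2]
    linarith
  calc ∑ i, (z i - y i) ^ 2
      ≤ ∑ i, (z i - y i) ^ 2 + ∑ i, ((w i - z i) ^ 2
          + 2 * ((z i - (y i - lam)) * (w i - z i)) + 2 * lam * (z i - w i)) := by linarith
    _ = ∑ i, (w i - y i) ^ 2 := by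
        rw [← Finset.sum_add_distrib]
        exact Finset.sum_congr rfl fun i _ => (expand i).symm
end

section
/- Let n ≥ 2 and M ≥ 1 be integers and set T = ⌈500 M² ln n⌉. Then there exist subsets S_1, S_2, …, S_T ⊆ [n] with the following property: for every nonzero vector g ∈ ℤ^n with ‖g‖₁ ≤ 3M, there exists j ∈ {1,…,T} such that exactly one index i ∈ S_j satisfies g_i ≠ 0. -/
open Finset

lemma aux_sum_pow_le (n : ℕ) (hn : 2 ≤ n) (k : ℕ) : ∑ s ∈ Finset.range (k+1), n^s ≤ 2 * n^k := by
  induction k with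
  | zero => simp
  | succ k ih =>
    rw [Finset.sum_range_succ]
    have h2 : 2 * n ^ k ≤ n ^ (k+1) := by
      rw [pow_succ]
      calc 2 * n ^ k = n ^ k * 2 := by ring
        _ ≤ n ^ k * n := by exact Nat.mul_le_mul_left _ hn
    omega

-- counting good assignments
lemma aux_count_good (n m : ℕ) (hm : 1 ≤ m) (P : Finset (Fin n)) (hP : P.Nonempty)
    (p : (Fin n → Fin m) → Prop) [DecidablePred p]
    (hp : ∀ c, p c ↔ ∃! i, i ∈ P ∧ (c i).val = 0) :
    (m-1)^(P.card - 1) * m^(n - P.card) ≤ (Finset.univ.filter p).card := by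
  obtain ⟨i₀, hi₀⟩ := hP
  classical
  set z : Fin m := ⟨0, hm⟩ with hz
  set t : Fin n → Finset (Fin m) := fun k =>
    if k = i₀ then {z} else if k ∈ P then Finset.univ.filter (fun x : Fin m => x.val ≠ 0) else Finset.univ with ht
  have hsub : Fintype.piFinset t ⊆ Finset.univ.filter p := by
    intro c hc
    rw [Fintype.mem_piFinset] at hc
    rw [Finset.mem_filter]
    refine ⟨Finset.mem_univ _, (hp c).2 ⟨i₀, ⟨hi₀, ?_⟩, ?_⟩⟩
    · have := hc i₀
      simp only [ht, if_pos rfl, Finset.mem_singleton] at this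
      rw [this]
    · rintro y ⟨hyP, hy0⟩
      by_contra hne
      have := hc y
      simp only [ht, if_neg hne, if_pos hyP, Finset.mem_filter] at this
      exact this.2 hy0
  have hcard : (Fintype.piFinset t).card = (m-1)^(P.card - 1) * m^(n - P.card) := by
    rw [Fintype.card_piFinset]
    have hcards : ∀ k, (t k).card = if k = i₀ then 1 else if k ∈ P then m - 1 else m := by
      intro k
      by_cases h1 : k = i₀
      · simp [ht, h1]
      · by_cases h2 : k ∈ P
        · simp only [ht, if_neg h1, if_pos h2]
          have he : Finset.univ.filter (fun x : Fin m => x.val ≠ 0) = Finset.univ.erase z := by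
            ext x
            simp only [Finset.mem_filter, Finset.mem_univ, true_and, Finset.mem_erase,
              and_true, hz, Ne, Fin.ext_iff]
          rw [he, Finset.card_erase_of_mem (Finset.mem_univ _)]
          simp
        · simp [ht, h1, h2]
    calc ∏ k, (t k).card = (∏ k ∈ P, (t k).card) * ∏ k ∈ Pᶜ, (t k).card :=
          (Finset.prod_mul_prod_compl P _).symm
      _ = (m-1)^(P.card - 1) * m^(n - P.card) := by
          congr 1
          · rw [← Finset.mul_prod_erase P _ hi₀, hcards i₀, if_pos rfl, one_mul]
            rw [Finset.prod_congr rfl (fun k hk => ?_), Finset.prod_const, Finset.card_erase_of_mem hi₀]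
            rw [hcards k, if_neg (Finset.ne_of_mem_erase hk), if_pos (Finset.mem_of_mem_erase hk)]
          · rw [Finset.prod_congr rfl (fun k hk => ?_), Finset.prod_const, Finset.card_compl,
              Fintype.card_fin]
            rw [Finset.mem_compl] at hk
            have hki : k ≠ i₀ := fun h => hk (h ▸ hi₀)
            rw [hcards k, if_neg hki, if_neg hk]
  calc (m-1)^(P.card - 1) * m^(n - P.card) = (Fintype.piFinset t).card := hcard.symm
    _ ≤ _ := Finset.card_le_card hsub
open Finset in
lemma aux_bad_card (n M : ℕ) (hM : 1 ≤ M) (P : Finset (Fin n)) (hP : P.Nonempty) (hs : P.card ≤ 3*M)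
    (p : (Fin n → Fin (10*M)) → Prop) [DecidablePred p]
    (hp : ∀ c, p c ↔ ∃! i, i ∈ P ∧ (c i).val = 0) :
    ((Finset.univ.filter (fun c => ¬ p c)).card : ℝ) ≤ (1 - 1/(20*M)) * ((10*M : ℕ) : ℝ)^n := by
  classical
  have hm1 : 1 ≤ 10*M := by omega
  have hsn : P.card ≤ n := by
    simpa using Finset.card_le_card (Finset.subset_univ P)
  have hs1 : 1 ≤ P.card := Finset.card_pos.2 hP
  have hsplit : (Finset.univ.filter p).card + (Finset.univ.filter (fun c => ¬ p c)).card
      = (10*M) ^ n := by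
    rw [Finset.card_filter_add_card_filter_not, Finset.card_univ, Fintype.card_fun,
      Fintype.card_fin, Fintype.card_fin]
  have hgood := aux_count_good n (10*M) hm1 P hP p hp
  set s := P.card with hsdef
  have hMr : (0:ℝ) < (M:ℝ) := by exact_mod_cast hM
  have hmr : (0:ℝ) < ((10*M : ℕ):ℝ) := by positivity
  have hmc : ((10*M : ℕ):ℝ) = 10*(M:ℝ) := by push_cast; ring
  have hsc : ((s-1 : ℕ) : ℝ) = (s:ℝ) - 1 := by
    have : (1:ℕ) ≤ s := hs1
    push_cast [this]; ring
  have hinv : (0:ℝ) < 1/((10*M:ℕ):ℝ) := by positivity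
  have hber : ((10*M:ℕ):ℝ) ^ (s-1) * (1/2) ≤ (((10*M:ℕ):ℝ) - 1)^(s-1) := by
    have h1 : (((10*M:ℕ):ℝ) - 1)^(s-1) = ((10*M:ℕ):ℝ)^(s-1) * (1 - 1/((10*M:ℕ):ℝ))^(s-1) := by
      rw [← mul_pow]
      congr 1
      field_simp
    have h2 : (1:ℝ) + (s-1 : ℕ) * (-(1/((10*M:ℕ):ℝ))) ≤ (1 + (-(1/((10*M:ℕ):ℝ))))^(s-1) := by
      apply one_add_mul_le_pow
      have : (1:ℝ)/((10*M:ℕ):ℝ) ≤ 1 := by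
        rw [div_le_one hmr]; exact_mod_cast hm1
      linarith
    have h30 : (s:ℝ) - 1 ≤ 5*(M:ℝ) := by
      have : (s:ℝ) ≤ 3*(M:ℝ) := by exact_mod_cast hs
      linarith
    have h5 : (5*(M:ℝ)) * (1/((10*M:ℕ):ℝ)) = 1/2 := by
      rw [hmc]; field_simp; ring
    have h6 : ((s:ℝ)-1) * (1/((10*M:ℕ):ℝ)) ≤ (5*(M:ℝ)) * (1/((10*M:ℕ):ℝ)) :=
      mul_le_mul_of_nonneg_right h30 (le_of_lt hinv)
    have h4 : (1:ℝ)/2 ≤ 1 + ((s-1:ℕ):ℝ) * (-(1/((10*M:ℕ):ℝ))) := by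
      rw [hsc]; linarith
    have h7 : (1/2:ℝ) ≤ (1 - 1/((10*M:ℕ):ℝ))^(s-1) := by
      rw [sub_eq_add_neg]; exact le_trans h4 h2
    rw [h1]
    have hmp : (0:ℝ) ≤ ((10*M:ℕ):ℝ)^(s-1) := by positivity
    exact mul_le_mul_of_nonneg_left h7 hmp
  have hpow : ((10*M:ℕ):ℝ)^(s-1) * ((10*M:ℕ):ℝ)^(n-s) * ((10*M:ℕ):ℝ) = ((10*M:ℕ):ℝ)^n := by
    rw [mul_assoc, ← pow_succ, ← pow_add]
    congr 1
    omega
  have hgoodr : ((10*M:ℕ):ℝ)^n / (20*M) ≤ ((Finset.univ.filter p).card : ℝ) := by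
    have hcast : ((((10*M)-1)^(s-1) * (10*M)^(n-s) : ℕ) : ℝ)
        = (((10*M:ℕ):ℝ)-1)^(s-1) * ((10*M:ℕ):ℝ)^(n-s) := by
      push_cast [Nat.cast_sub hm1]
      ring
    have hmn : (0:ℝ) ≤ ((10*M:ℕ):ℝ)^(n-s) := by positivity
    have h6 : ((10*M:ℕ):ℝ)^(s-1) * (1/2) * ((10*M:ℕ):ℝ)^(n-s)
        ≤ (((10*M:ℕ):ℝ)-1)^(s-1) * ((10*M:ℕ):ℝ)^(n-s) :=
      mul_le_mul_of_nonneg_right hber hmn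
    have h7 : ((10*M:ℕ):ℝ)^(s-1) * (1/2) * ((10*M:ℕ):ℝ)^(n-s) = ((10*M:ℕ):ℝ)^n / (20*M) := by
      rw [← hpow, hmc]
      field_simp
      ring
    calc ((10*M:ℕ):ℝ)^n / (20*M) = ((10*M:ℕ):ℝ)^(s-1) * (1/2) * ((10*M:ℕ):ℝ)^(n-s) := h7.symm
      _ ≤ (((10*M:ℕ):ℝ)-1)^(s-1) * ((10*M:ℕ):ℝ)^(n-s) := h6
      _ = ((((10*M)-1)^(s-1) * (10*M)^(n-s) : ℕ) : ℝ) := hcast.symm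
      _ ≤ ((Finset.univ.filter p).card : ℝ) := by exact_mod_cast hgood
  have hsplitr : ((Finset.univ.filter p).card : ℝ)
      + ((Finset.univ.filter (fun c => ¬ p c)).card : ℝ) = ((10*M:ℕ):ℝ)^n := by
    rw [← Nat.cast_pow]
    exact_mod_cast hsplit
  have hrw : (1 - 1/(20*(M:ℝ))) * ((10*M:ℕ):ℝ)^n = ((10*M:ℕ):ℝ)^n - ((10*M:ℕ):ℝ)^n/(20*M) := by
    ring
  rw [hrw]
  linarith
open Finset in
lemma aux_exists (n M T : ℕ) (hn : 2 ≤ n) (hM : 1 ≤ M)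
    (hT : (500:ℝ) * (M:ℝ)^2 * Real.log n ≤ T) :
    ∃ c : Fin T → Fin n → Fin (10*M),
      ∀ P : Finset (Fin n), P.Nonempty → P.card ≤ 3*M →
        ∃ j, ∃! i, i ∈ P ∧ (c j i).val = 0 := by
  classical
  set Bad : Finset (Fin n) → Finset (Fin n → Fin (10*M)) :=
    fun P => Finset.univ.filter (fun c => ¬ ∃! i, i ∈ P ∧ (c i).val = 0) with hBad
  set Ps : Finset (Finset (Fin n)) :=
    Finset.univ.filter (fun P : Finset (Fin n) => P.Nonempty ∧ P.card ≤ 3*M) with hPs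
  set Fail : Finset (Fin n) → Finset (Fin T → Fin n → Fin (10*M)) :=
    fun P => Fintype.piFinset (fun _ => Bad P) with hFail
  -- cardinality of universe
  have hU : (Finset.univ : Finset (Fin T → Fin n → Fin (10*M))).card = ((10*M)^n)^T := by
    rw [Finset.card_univ, Fintype.card_fun, Fintype.card_fun, Fintype.card_fin,
      Fintype.card_fin, Fintype.card_fin]
  -- card of Fail
  have hFailcard : ∀ P, (Fail P).card = (Bad P).card ^ T := by
    intro P
    rw [hFail]
    rw [Fintype.card_piFinset]
    simp
  -- card of Ps
  have hPscard : Ps.card ≤ 2 * n^(3*M) := by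
    have hsub : Ps ⊆ (Finset.range (3*M+1)).biUnion
        (fun s => Finset.powersetCard s (Finset.univ : Finset (Fin n))) := by
      intro P hP
      rw [hPs, Finset.mem_filter] at hP
      rw [Finset.mem_biUnion]
      exact ⟨P.card, Finset.mem_range.2 (by omega), by
        rw [Finset.mem_powersetCard]; exact ⟨Finset.subset_univ _, rfl⟩⟩
    calc Ps.card ≤ _ := Finset.card_le_card hsub
      _ ≤ ∑ s ∈ Finset.range (3*M+1), (Finset.powersetCard s (Finset.univ : Finset (Fin n))).card :=
        Finset.card_biUnion_le
      _ ≤ ∑ s ∈ Finset.range (3*M+1), n^s := by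
        apply Finset.sum_le_sum
        intro s _
        rw [Finset.card_powersetCard, Finset.card_univ, Fintype.card_fin]
        exact Nat.choose_le_pow n s
      _ ≤ 2 * n^(3*M) := aux_sum_pow_le n hn (3*M)
  -- key real inequality
  have hMr : (0:ℝ) < (M:ℝ) := by exact_mod_cast hM
  have hnr : (1:ℝ) < (n:ℝ) := by exact_mod_cast hn
  have hlogn : (0:ℝ) < Real.log n := Real.log_pos hnr
  have heps0 : (0:ℝ) ≤ 1 - 1/(20*(M:ℝ)) := by
    have hM1 : (1:ℝ) ≤ (M:ℝ) := by exact_mod_cast hM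
    have : 1/(20*(M:ℝ)) ≤ 1 := by
      rw [div_le_one (by positivity)]
      linarith
    linarith
  have hkey : 2 * (n:ℝ)^(3*M) * ((1 - 1/(20*(M:ℝ))))^T < 1 := by
    have h1 : (1 - 1/(20*(M:ℝ))) ≤ Real.exp (-(1/(20*(M:ℝ)))) := by
      have := Real.add_one_le_exp (-(1/(20*(M:ℝ))))
      linarith
    have h2 : ((1 - 1/(20*(M:ℝ))))^T ≤ Real.exp (-(1/(20*(M:ℝ))))^T :=
      pow_le_pow_left₀ heps0 h1 T
    have h3 : Real.exp (-(1/(20*(M:ℝ))))^T = Real.exp ((T:ℝ) * (-(1/(20*(M:ℝ))))) :=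
      (Real.exp_nat_mul _ T).symm
    have h4 : (T:ℝ) * (-(1/(20*(M:ℝ)))) ≤ -((25*M : ℕ) * Real.log n) := by
      have h5 : (500:ℝ) * (M:ℝ)^2 * Real.log n * (1/(20*(M:ℝ))) = 25*(M:ℝ)*Real.log n := by
        field_simp
        ring
      have h6 : (500:ℝ) * (M:ℝ)^2 * Real.log n * (1/(20*(M:ℝ))) ≤ (T:ℝ) * (1/(20*(M:ℝ))) :=
        mul_le_mul_of_nonneg_right hT (by positivity)
      push_cast
      nlinarith
    have h7 : Real.exp (-((25*M : ℕ) * Real.log n)) = ((n:ℝ)^(25*M))⁻¹ := by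
      rw [Real.exp_neg, Real.exp_nat_mul, Real.exp_log (by positivity)]
    have h8 : ((1 - 1/(20*(M:ℝ))))^T ≤ ((n:ℝ)^(25*M))⁻¹ := by
      rw [← h7]
      exact le_trans h2 (by rw [h3]; exact Real.exp_le_exp.2 h4)
    have h9 : (2:ℝ) * (n:ℝ)^(3*M) * ((n:ℝ)^(25*M))⁻¹ < 1 := by
      rw [← div_eq_mul_inv, div_lt_one (by positivity)]
      have hnat : 2 * n^(3*M) < n^(25*M) := by
        calc 2 * n^(3*M) ≤ n * n^(3*M) := Nat.mul_le_mul_right _ hn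
          _ = n^(3*M+1) := by rw [pow_succ]; ring
          _ < n^(25*M) := Nat.pow_lt_pow_right hn (by omega)
      exact_mod_cast hnat
    have h10 : (0:ℝ) ≤ 2 * (n:ℝ)^(3*M) := by positivity
    calc 2 * (n:ℝ)^(3*M) * ((1 - 1/(20*(M:ℝ))))^T
        ≤ 2 * (n:ℝ)^(3*M) * ((n:ℝ)^(25*M))⁻¹ := mul_le_mul_of_nonneg_left h8 h10
      _ < 1 := h9
  -- the union is small
  have hbig : ((Ps.biUnion Fail).card : ℝ)
      < ((Finset.univ : Finset (Fin T → Fin n → Fin (10*M))).card : ℝ) := by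
    have step1 : ((Ps.biUnion Fail).card : ℝ) ≤ ∑ P ∈ Ps, ((Fail P).card : ℝ) := by
      exact_mod_cast Finset.card_biUnion_le
    have step2 : ∀ P ∈ Ps, ((Fail P).card : ℝ)
        ≤ ((1 - 1/(20*(M:ℝ))) * (((10*M : ℕ)):ℝ)^n)^T := by
      intro P hP
      rw [hPs, Finset.mem_filter] at hP
      have hb := aux_bad_card n M hM P hP.2.1 hP.2.2
        (fun c => ∃! i, i ∈ P ∧ (c i).val = 0) (fun c => Iff.rfl)
      rw [hFailcard P, Nat.cast_pow]
      exact pow_le_pow_left₀ (Nat.cast_nonneg _) hb T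
    have step3 : ((Ps.biUnion Fail).card : ℝ)
        ≤ (Ps.card : ℝ) * ((1 - 1/(20*(M:ℝ))) * (((10*M : ℕ)):ℝ)^n)^T := by
      calc ((Ps.biUnion Fail).card : ℝ) ≤ ∑ P ∈ Ps, ((Fail P).card : ℝ) := step1
        _ ≤ ∑ _P ∈ Ps, ((1 - 1/(20*(M:ℝ))) * (((10*M : ℕ)):ℝ)^n)^T :=
          Finset.sum_le_sum step2
        _ = (Ps.card : ℝ) * _ := by rw [Finset.sum_const, nsmul_eq_mul]
    have hbound : (0:ℝ) ≤ ((1 - 1/(20*(M:ℝ))) * (((10*M : ℕ)):ℝ)^n)^T := by positivity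
    have step4 : (Ps.card : ℝ) * ((1 - 1/(20*(M:ℝ))) * (((10*M : ℕ)):ℝ)^n)^T
        ≤ (2 * (n:ℝ)^(3*M)) * ((1 - 1/(20*(M:ℝ))) * (((10*M : ℕ)):ℝ)^n)^T := by
      apply mul_le_mul_of_nonneg_right _ hbound
      exact_mod_cast hPscard
    have step5 : (2 * (n:ℝ)^(3*M)) * ((1 - 1/(20*(M:ℝ))) * (((10*M : ℕ)):ℝ)^n)^T
        < ((((10*M : ℕ)):ℝ)^n)^T := by
      rw [mul_pow]
      calc (2 * (n:ℝ)^(3*M)) * ((1 - 1/(20*(M:ℝ)))^T * ((((10*M : ℕ)):ℝ)^n)^T)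
          = (2 * (n:ℝ)^(3*M) * (1 - 1/(20*(M:ℝ)))^T) * ((((10*M : ℕ)):ℝ)^n)^T := by ring
        _ < 1 * ((((10*M : ℕ)):ℝ)^n)^T := by
            apply mul_lt_mul_of_pos_right hkey
            positivity
        _ = _ := one_mul _
    have hUr : ((Finset.univ : Finset (Fin T → Fin n → Fin (10*M))).card : ℝ)
        = ((((10*M : ℕ)):ℝ)^n)^T := by
      rw [hU]; push_cast; ring
    rw [hUr]
    exact lt_of_le_of_lt (le_trans step3 step4) step5
  have hlt : (Ps.biUnion Fail).card
      < (Finset.univ : Finset (Fin T → Fin n → Fin (10*M))).card := by exact_mod_cast hbig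
  obtain ⟨c, hc⟩ : ∃ c : Fin T → Fin n → Fin (10*M), c ∉ Ps.biUnion Fail := by
    by_contra h
    push_neg at h
    have : (Finset.univ : Finset (Fin T → Fin n → Fin (10*M))) ⊆ Ps.biUnion Fail :=
      fun x _ => h x
    exact absurd (Finset.card_le_card this) (by omega)
  refine ⟨c, fun P hPne hPcard => ?_⟩
  have hPmem : P ∈ Ps := by
    rw [hPs, Finset.mem_filter]
    exact ⟨Finset.mem_univ _, hPne, hPcard⟩
  have hcP : c ∉ Fail P := fun h => hc (Finset.mem_biUnion.2 ⟨P, hPmem, h⟩)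
  rw [hFail, Fintype.mem_piFinset] at hcP
  push_neg at hcP
  obtain ⟨j, hj⟩ := hcP
  refine ⟨j, ?_⟩
  rw [hBad, Finset.mem_filter] at hj
  push_neg at hj
  exact hj (Finset.mem_univ _)
/-- Existence of a family of `T = ⌈500 M² ln n⌉` isolating subsets of `[n]`: for every
nonzero integer vector `g` with `‖g‖₁ ≤ 3M`, some set in the family contains exactly one
index at which `g` is nonzero. -/
theorem stmt17 (n M : ℕ) (hn : 2 ≤ n) (hM : 1 ≤ M) :
    ∃ S : Fin ⌈(500 : ℝ) * (M : ℝ) ^ 2 * Real.log n⌉₊ → Finset (Fin n),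
      ∀ g : Fin n → ℤ, g ≠ 0 → (∑ i, |g i|) ≤ 3 * (M : ℤ) →
        ∃ j, ∃! i : Fin n, i ∈ S j ∧ g i ≠ 0 := by
  classical
  set T : ℕ := ⌈(500 : ℝ) * (M : ℝ) ^ 2 * Real.log n⌉₊ with hTdef
  have hT : (500:ℝ) * (M:ℝ)^2 * Real.log n ≤ T := Nat.le_ceil _
  obtain ⟨c, hc⟩ := aux_exists n M T hn hM hT
  refine ⟨fun j => Finset.univ.filter (fun i => (c j i).val = 0), fun g hg hnorm => ?_⟩
  set P : Finset (Fin n) := Finset.univ.filter (fun i => g i ≠ 0) with hPdef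
  have hPne : P.Nonempty := by
    by_contra h
    rw [Finset.not_nonempty_iff_eq_empty] at h
    apply hg
    funext i
    by_contra hgi
    have hgi' : g i ≠ 0 := by simpa using hgi
    have : i ∈ P := by rw [hPdef]; simp [hgi']
    rw [h] at this
    exact absurd this (Finset.notMem_empty i)
  have hPcard : P.card ≤ 3*M := by
    have h1 : (P.card : ℤ) ≤ ∑ i ∈ P, |g i| := by
      have := Finset.card_nsmul_le_sum P (fun i => |g i|) 1 (fun i hi => ?_)
      · simpa using this
      · rw [hPdef, Finset.mem_filter] at hi
        exact Int.one_le_abs (by simpa using hi.2)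
    have h2 : ∑ i ∈ P, |g i| ≤ ∑ i, |g i| :=
      Finset.sum_le_sum_of_subset_of_nonneg (Finset.subset_univ P)
        (fun i _ _ => abs_nonneg _)
    have h3 : (P.card : ℤ) ≤ 3 * (M : ℤ) := le_trans h1 (le_trans h2 hnorm)
    exact_mod_cast h3
  obtain ⟨j, i, ⟨hiP, hi0⟩, huniq⟩ := hc P hPne hPcard
  rw [hPdef, Finset.mem_filter] at hiP
  refine ⟨j, i, ⟨by simp [hi0], hiP.2⟩, fun y hy => ?_⟩
  apply huniq
  refine ⟨by rw [hPdef]; simp [hy.2], ?_⟩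
  have := hy.1
  simpa using this
end
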